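/- Let {(Z_n, Y_n) : n ≥ 1} be random pairs where Y_n are Bernoulli, and let W be a random variable such that (Z_1, Y_1, W) is independent of {(Z_n, Y_n) : n ≥ 2}, and {(Z_n, Y_n) : n ≥ 2} are i.i.d. with E[Z_n] = μ and P(Y_n = 1) = p > 0. Let N = inf{n ≥ 1 : Y_n = 1}, μ_x = E[Z_1 | W = x], p_x = P(Y_1 = 1 | W = x). Then E[Σ_{t=1}^N Z_t | W = x] = μ_x + (1 − p_x)·(μ/p). -/

import Mathlib

open MeasureTheory ProbabilityTheory
open scoped ENNReal NNReal

set_option maxHeartbeats 1000000 in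
theorem stmt_8 {Ω : Type*} [MeasurableSpace Ω] (μ : Measure Ω) [IsProbabilityMeasure μ]
    (Z : ℕ → Ω → ℝ) (Y : ℕ → Ω → Bool) (W : Ω → ℝ)
    (hZmeas : ∀ n, Measurable (Z n)) (hYmeas : ∀ n, Measurable (Y n))
    (hWmeas : Measurable W) (hZint : ∀ n, Integrable (Z n) μ)
    -- (Z 1, Y 1, W) is independent of {(Z n, Y n) : n ≥ 2}
    (hindep : IndepFun (fun ω => (Z 1 ω, Y 1 ω, W ω))
      (fun ω => (fun n : {n : ℕ // 2 ≤ n} => (Z (n : ℕ) ω, Y (n : ℕ) ω))) μ)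
    -- {(Z n, Y n) : n ≥ 2} are identically distributed
    (hiid : ∀ n, 2 ≤ n → Measure.map (fun ω => (Z n ω, Y n ω)) μ =
      Measure.map (fun ω => (Z 2 ω, Y 2 ω)) μ)
    -- and mutually independent
    (hindep2 : iIndepFun
      (fun (n : {n : ℕ // 2 ≤ n}) ω => (Z (n : ℕ) ω, Y (n : ℕ) ω)) μ)
    (μ' p : ℝ) (hmean : ∀ n, 2 ≤ n → ∫ ω, Z n ω ∂μ = μ')
    (hYp : ∀ n, 2 ≤ n → (μ {ω | Y n ω = true}).toReal = p) (hppos : 0 < p)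
    (N : Ω → ℕ) (hN : ∀ ω, N ω = sInf {n | 1 ≤ n ∧ Y n ω = true})
    (x : ℝ) (hWx : 0 < μ {ω | W ω = x})
    (μx px : ℝ)
    (hμx : μx = ∫ ω, Z 1 ω ∂(ProbabilityTheory.cond μ {ω | W ω = x}))
    (hpx : px = ((ProbabilityTheory.cond μ {ω | W ω = x}) {ω | Y 1 ω = true}).toReal) :
    ∫ ω, (∑ t ∈ Finset.Icc 1 (N ω), Z t ω) ∂(ProbabilityTheory.cond μ {ω | W ω = x})
      = μx + (1 - px) * (μ' / p) := by
  classical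
  -- notation
  set S : Set Ω := {ω | W ω = x} with hSdef
  have hS : MeasurableSet S := hWmeas (measurableSet_singleton x)
  set ν : Measure Ω := ProbabilityTheory.cond μ S with hνdef
  have hνprob : IsProbabilityMeasure ν := cond_isProbabilityMeasure hWx.ne'
  have hac : ν ≪ μ := cond_absolutelyContinuous
  -- basic measurable sets
  have hYsetT : ∀ n, MeasurableSet {ω | Y n ω = true} := fun n =>
    (hYmeas n) (measurableSet_singleton true)
  have hYsetF : ∀ n, MeasurableSet {ω | Y n ω = false} := fun n =>
    (hYmeas n) (measurableSet_singleton false)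
  -- the sets A t : no success strictly before t
  set A : ℕ → Set Ω := fun t => {ω | ∀ k ∈ Finset.Ico 1 t, Y k ω = false} with hAdef
  have hA : ∀ t, MeasurableSet (A t) := by
    intro t
    have : A t = ⋂ k ∈ Finset.Ico 1 t, {ω | Y k ω = false} := by
      ext ω; simp [hAdef]
    rw [this]
    exact Finset.measurableSet_biInter _ (fun k _ => hYsetF k)
  set g : ℕ → Ω → ℝ := fun n => (A (n+1)).indicator (Z (n+1)) with hgdef
  have hgmeas : ∀ n, Measurable (g n) := fun n => (hZmeas (n+1)).indicator (hA (n+1))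
  have hg0 : g 0 = Z 1 := by
    funext ω
    have : ω ∈ A 1 := by intro k hk; exact absurd hk (by simp)
    simp [hgdef, Set.indicator_of_mem this]
  -- success event
  set E : Set Ω := {ω | ∃ n, 1 ≤ n ∧ Y n ω = true} with hEdef
  -- pointwise identity on E
  have hptwise : ∀ ω ∈ E, (∑ t ∈ Finset.Icc 1 (N ω), Z t ω) = ∑' n, g n ω := by
    intro ω hω
    have hne : {n | 1 ≤ n ∧ Y n ω = true}.Nonempty := hω
    have hmem : 1 ≤ N ω ∧ Y (N ω) ω = true := by
      rw [hN ω]; exact Nat.sInf_mem hne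
    have hmin : ∀ k, 1 ≤ k → Y k ω = true → N ω ≤ k := fun k h1 h2 => by
      rw [hN ω]; exact Nat.sInf_le ⟨h1, h2⟩
    have hiff : ∀ n : ℕ, ω ∈ A (n+1) ↔ n + 1 ≤ N ω := by
      intro n
      constructor
      · intro h
        by_contra hlt
        push_neg at hlt
        have hk : N ω ∈ Finset.Ico 1 (n+1) := Finset.mem_Ico.mpr ⟨hmem.1, hlt⟩
        have := h (N ω) hk
        rw [hmem.2] at this
        simp at this
      · intro h k hk
        obtain ⟨hk1, hk2⟩ := Finset.mem_Ico.mp hk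
        cases hYk : Y k ω with
        | false => rfl
        | true =>
          have := hmin k hk1 hYk
          omega
    have hval : ∀ n, g n ω = if n + 1 ≤ N ω then Z (n+1) ω else 0 := by
      intro n
      by_cases h : n + 1 ≤ N ω
      · rw [if_pos h]
        exact Set.indicator_of_mem ((hiff n).mpr h) _
      · rw [if_neg h]
        exact Set.indicator_of_notMem (fun hmem' => h ((hiff n).mp hmem')) _
    have htsum : ∑' n, g n ω = ∑ n ∈ Finset.range (N ω), g n ω := by
      refine tsum_eq_sum ?_
      intro n hn
      rw [hval n, if_neg]
      simp only [Finset.mem_range, not_lt] at hn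
      omega
    rw [htsum]
    have hIcc : Finset.Icc 1 (N ω) = Finset.Ico 1 (N ω + 1) := by
      rw [Finset.Ico_add_one_right_eq_Icc]
    rw [hIcc, Finset.sum_Ico_eq_sum_range]
    simp only [Nat.add_sub_cancel]
    refine Finset.sum_congr rfl ?_
    intro n hn
    rw [hval n, if_pos]
    · rw [Nat.add_comm 1 n]
    · simp only [Finset.mem_range] at hn
      omega
  -- pE and q
  set pE : ENNReal := μ {ω | Y 2 ω = true} with hpEdef
  have hpE : pE.toReal = p := hYp 2 le_rfl
  have hpEne : pE ≠ 0 := by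
    intro h
    apply hppos.ne'
    rw [← hpE, h]
    simp
  have hpEn : ∀ n, 2 ≤ n → μ {ω | Y n ω = true} = pE := by
    intro n hn
    have h1 : {ω | Y n ω = true} = (fun ω => (Z n ω, Y n ω)) ⁻¹' (Set.univ ×ˢ {true}) := by
      ext ω; simp
    have h2 : {ω | Y 2 ω = true} = (fun ω => (Z 2 ω, Y 2 ω)) ⁻¹' (Set.univ ×ˢ {true}) := by
      ext ω; simp
    have hms : MeasurableSet ((Set.univ : Set ℝ) ×ˢ ({true} : Set Bool)) :=
      MeasurableSet.univ.prod (measurableSet_singleton true)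
    rw [hpEdef, h1, h2,
      ← Measure.map_apply ((hZmeas n).prodMk (hYmeas n)) hms,
      ← Measure.map_apply ((hZmeas 2).prodMk (hYmeas 2)) hms,
      hiid n hn]
  set q : ENNReal := 1 - pE with hqdef
  have hpEle : pE ≤ 1 := prob_le_one
  have hq1 : q < 1 := by
    rw [hqdef]
    exact ENNReal.sub_lt_self ENNReal.one_ne_top one_ne_zero hpEne
  have hqF : ∀ n, 2 ≤ n → μ {ω | Y n ω = false} = q := by
    intro n hn
    have hc : {ω | Y n ω = false} = {ω | Y n ω = true}ᶜ := by
      ext ω; simp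
    rw [hc, prob_compl_eq_one_sub (hYsetT n), hpEn n hn]
  have hqreal : q.toReal = 1 - p := by
    rw [hqdef, ENNReal.toReal_sub_of_le hpEle ENNReal.one_ne_top, ENNReal.toReal_one, hpE]
  -- index embedding and sets B m
  set e : ℕ → {n : ℕ // 2 ≤ n} := fun j => ⟨j + 2, by omega⟩ with hedef
  have he : Function.Injective e := by
    intro a b hab
    simpa [hedef] using hab
  set T : ℕ → Finset {n : ℕ // 2 ≤ n} := fun m => (Finset.range m).image e with hTdef
  set B : ℕ → Set Ω := fun m => ⋂ i ∈ T m, {ω | Y (i : ℕ) ω = false} with hBdef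
  have hB : ∀ m, MeasurableSet (B m) := fun m =>
    Finset.measurableSet_biInter _ (fun i _ => hYsetF (i : ℕ))
  have hμB : ∀ m, μ (B m) = q ^ m := by
    intro m
    have hsets : ∀ i : {n : ℕ // 2 ≤ n},
        {ω | Y (i : ℕ) ω = false}
          = (fun ω => (Z (i : ℕ) ω, Y (i : ℕ) ω)) ⁻¹' (Set.univ ×ˢ {false}) := by
      intro i; ext ω; simp
    have hmeq := hindep2.measure_inter_preimage_eq_mul (T m)
      (sets := fun _ => Set.univ ×ˢ {false})
      (fun i _ => MeasurableSet.univ.prod (measurableSet_singleton false))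
    have : B m = ⋂ i ∈ T m, (fun ω => (Z (i : ℕ) ω, Y (i : ℕ) ω)) ⁻¹' (Set.univ ×ˢ {false}) := by
      rw [hBdef]
      exact Set.iInter₂_congr (fun i _ => hsets i)
    rw [this, hmeq]
    have hcard : (T m).card = m := by
      rw [hTdef]
      rw [Finset.card_image_of_injective _ he, Finset.card_range]
    calc ∏ i ∈ T m, μ ((fun ω => (Z (i : ℕ) ω, Y (i : ℕ) ω)) ⁻¹' (Set.univ ×ˢ {false}))
        = ∏ i ∈ T m, q := by
          refine Finset.prod_congr rfl fun i _ => ?_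
          rw [← hsets i]
          exact hqF (i : ℕ) i.2
      _ = q ^ m := by rw [Finset.prod_const, hcard]
  -- E has full measure
  have hEc : μ Eᶜ = 0 := by
    have hsub : ∀ m, Eᶜ ⊆ B m := by
      intro m ω hω
      have hall : ∀ n, 1 ≤ n → Y n ω = false := by
        intro n hn
        by_contra h
        exact hω ⟨n, hn, by simpa using h⟩
      rw [hBdef]
      simp only [Set.mem_iInter]
      intro i _
      exact hall (i : ℕ) (by omega)
    have hle : ∀ m, μ Eᶜ ≤ q ^ m := fun m => (measure_mono (hsub m)).trans_eq (hμB m)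
    have ht := ENNReal.tendsto_pow_atTop_nhds_zero_of_lt_one hq1
    exact le_antisymm (ge_of_tendsto' ht hle) zero_le
  have hae : (fun ω => ∑ t ∈ Finset.Icc 1 (N ω), Z t ω) =ᵐ[ν] fun ω => ∑' n, g n ω := by
    have hνEc : ν Eᶜ = 0 := hac hEc
    rw [Filter.EventuallyEq, ae_iff]
    exact measure_mono_null (fun ω hω hE' => hω (hptwise ω hE')) hνEc
  -- A (m+2) decomposition
  have hAm : ∀ m, A (m + 2) = {ω | Y 1 ω = false} ∩ B m := by
    intro m
    ext ω
    simp only [hAdef, hBdef, hTdef, hedef, Set.mem_setOf_eq, Set.mem_inter_iff,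
      Set.mem_iInter, Finset.mem_image, Finset.mem_range, Finset.mem_Ico]
    constructor
    · intro h
      refine ⟨h 1 (by omega), ?_⟩
      rintro i ⟨j, hj, rfl⟩
      exact h (j + 2) (by omega)
    · rintro ⟨h1, h2⟩ k ⟨hk1, hk2⟩
      rcases Nat.lt_or_ge k 2 with hk | hk
      · have : k = 1 := by omega
        rwa [this]
      · exact h2 ⟨k, hk⟩ ⟨k - 2, by omega, Subtype.ext (by simp; omega)⟩
    -- measurability of the pairs
  have hpair : ∀ i : {n : ℕ // 2 ≤ n}, Measurable (fun ω => (Z (i : ℕ) ω, Y (i : ℕ) ω)) :=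
    fun i => (hZmeas _).prodMk (hYmeas _)
  -- the product over T m is the indicator of B m
  have hprodB : ∀ m ω, (∏ i ∈ T m, if Y (i : ℕ) ω = false then (1:ℝ) else 0)
      = (B m).indicator (fun _ => (1:ℝ)) ω := by
    intro m ω
    by_cases h : ω ∈ B m
    · rw [Set.indicator_of_mem h]
      refine Finset.prod_eq_one fun i hi => ?_
      rw [hBdef] at h
      simp only [Set.mem_iInter, Set.mem_setOf_eq] at h
      rw [if_pos (h i hi)]
    · rw [Set.indicator_of_notMem h]
      rw [hBdef] at h
      simp only [Set.mem_iInter, Set.mem_setOf_eq, not_forall] at h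
      obtain ⟨i, hi, hYi⟩ := h
      exact Finset.prod_eq_zero hi (if_neg hYi)
  -- independence of Z (m+2) and the indicator of B m
  have hZB : ∀ m, IndepFun (Z (m+2)) ((B m).indicator (fun _ => (1:ℝ))) μ := by
    intro m
    set i0 : {n : ℕ // 2 ≤ n} := ⟨m + 2, by omega⟩ with hi0
    have hdisj : Disjoint ({i0} : Finset {n : ℕ // 2 ≤ n}) (T m) := by
      rw [Finset.disjoint_singleton_left, hTdef]
      simp only [Finset.mem_image, Finset.mem_range, not_exists, not_and]
      intro j hj hje
      have := congrArg Subtype.val hje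
      simp only [hedef, hi0] at this
      omega
    have hbase := hindep2.indepFun_finset {i0} (T m) hdisj hpair
    set φ2 : ({i // i ∈ ({i0} : Finset {n : ℕ // 2 ≤ n})} → ℝ × Bool) → ℝ :=
      fun v => (v ⟨i0, Finset.mem_singleton_self i0⟩).1 with hφ2
    set ψ2 : ({i // i ∈ T m} → ℝ × Bool) → ℝ :=
      fun v => ∏ i ∈ (T m).attach, if (v i).2 = false then (1:ℝ) else 0 with hψ2
    have hφ2m : Measurable φ2 := (measurable_pi_apply _).fst
    have hψ2m : Measurable ψ2 := by
      refine Finset.measurable_prod _ fun i _ => ?_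
      exact Measurable.ite ((measurable_pi_apply i).snd (measurableSet_singleton false))
        measurable_const measurable_const
    have hcomp := hbase.comp hφ2m hψ2m
    refine hcomp.congr (Filter.Eventually.of_forall fun ω => rfl)
      (Filter.Eventually.of_forall fun ω => ?_)
    simp only [hψ2, Function.comp_apply]
    rw [← hprodB m ω]
    exact Finset.prod_attach (T m) (fun k => if Y (k : ℕ) ω = false then (1:ℝ) else 0)
  -- integral facts for the indicator of B m
  have hχint : ∀ m, Integrable ((B m).indicator (fun _ => (1:ℝ))) μ :=
    fun m => (integrable_const 1).indicator (hB m)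
  have hχval : ∀ m, ∫ ω, (B m).indicator (fun _ => (1:ℝ)) ω ∂μ = (1 - p) ^ m := by
    intro m
    rw [integral_indicator_const (1:ℝ) (hB m)]
    simp [measureReal_def, hμB m, ENNReal.toReal_pow, hqreal]
  have hVmul : ∀ m, (B m).indicator (Z (m+2))
      = fun ω => Z (m+2) ω * (B m).indicator (fun _ => (1:ℝ)) ω := by
    intro m; funext ω
    by_cases h : ω ∈ B m <;>
      simp [Set.indicator_of_mem, Set.indicator_of_notMem, h]
  have hVint2 : ∀ m, ∫ ω, Z (m+2) ω * (B m).indicator (fun _ => (1:ℝ)) ω ∂μ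
      = μ' * (1-p) ^ m := by
    intro m
    have hm := (hZB m).integral_fun_mul_eq_mul_integral (hZint (m+2)).1 (hχint m).1
    have : ∫ ω, Z (m+2) ω * (B m).indicator (fun _ => (1:ℝ)) ω ∂μ
        = (∫ ω, Z (m+2) ω ∂μ) * ∫ ω, (B m).indicator (fun _ => (1:ℝ)) ω ∂μ := hm
    rw [this, hmean (m+2) (by omega), hχval m]
  have hp1 : p ≤ 1 := by
    rw [← hpE]
    simpa using ENNReal.toReal_mono ENNReal.one_ne_top hpEle
  -- value of the terms for n ≥ 1
  have hterm : ∀ m : ℕ, ∫ ω, g (m+1) ω ∂ν = (1 - px) * μ' * (1-p) ^ m := by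
    intro m
    have hcondint : ∀ f : Ω → ℝ,
        ∫ ω, f ω ∂ν = (μ S).toReal⁻¹ * ∫ ω, S.indicator f ω ∂μ := by
      intro f
      rw [hνdef, ProbabilityTheory.cond, integral_smul_measure, ← integral_indicator hS]
      rw [ENNReal.toReal_inv, smul_eq_mul]
    set φ : ℝ × Bool × ℝ → ℝ := fun c => if c.2.2 = x ∧ c.2.1 = false then 1 else 0 with hφdef
    have hφm : Measurable φ := by
      refine Measurable.ite ?_ measurable_const measurable_const
      have : {c : ℝ × Bool × ℝ | c.2.2 = x ∧ c.2.1 = false}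
          = ((fun c : ℝ × Bool × ℝ => c.2.2) ⁻¹' {x})
            ∩ ((fun c : ℝ × Bool × ℝ => c.2.1) ⁻¹' {false}) := by
        ext c; simp
      rw [this]
      exact ((measurable_snd.snd) (measurableSet_singleton x)).inter
        ((measurable_snd.fst) (measurableSet_singleton false))
    set ψ : ({n : ℕ // 2 ≤ n} → ℝ × Bool) → ℝ :=
      fun v => (v ⟨m+2, by omega⟩).1 * ∏ i ∈ T m, (if (v i).2 = false then (1:ℝ) else 0)
      with hψdef
    have hψm : Measurable ψ := by
      refine Measurable.mul ((measurable_pi_apply _).fst) ?_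
      refine Finset.measurable_prod _ fun i _ => ?_
      exact Measurable.ite ((measurable_pi_apply i).snd (measurableSet_singleton false))
        measurable_const measurable_const
    have hUV := hindep.comp hφm hψm
    set F : Set Ω := {ω | Y 1 ω = false} with hFdef
    have hUeq : (φ ∘ fun ω => (Z 1 ω, Y 1 ω, W ω)) = (S ∩ F).indicator (fun _ => (1:ℝ)) := by
      funext ω
      by_cases h1 : W ω = x <;> by_cases h2 : Y 1 ω = false <;>
        simp [hφdef, Function.comp, Set.indicator_apply, hSdef, hFdef,
          Set.mem_inter_iff, Set.mem_setOf_eq, h1, h2]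
    have hVeq : (ψ ∘ fun ω => (fun n : {n : ℕ // 2 ≤ n} => (Z (n : ℕ) ω, Y (n : ℕ) ω)))
        = fun ω => Z (m+2) ω * (B m).indicator (fun _ => (1:ℝ)) ω := by
      funext ω
      show Z (m+2) ω * (∏ i ∈ T m, if Y (i : ℕ) ω = false then (1:ℝ) else 0)
        = Z (m+2) ω * (B m).indicator (fun _ => (1:ℝ)) ω
      rw [hprodB m ω]
    rw [hUeq, hVeq] at hUV
    have hUint : Integrable ((S ∩ F).indicator (fun _ => (1:ℝ))) μ :=
      (integrable_const 1).indicator (hS.inter (hYsetF 1))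
    have hVint : Integrable (fun ω => Z (m+2) ω * (B m).indicator (fun _ => (1:ℝ)) ω) μ := by
      rw [← hVmul m]; exact (hZint (m+2)).indicator (hB m)
    have hmul := hUV.integral_fun_mul_eq_mul_integral hUint.1 hVint.1
    have hg1 : g (m+1) = (A (m+2)).indicator (Z (m+2)) := rfl
    have hSind : S.indicator (g (m+1)) = fun ω =>
        (S ∩ F).indicator (fun _ => (1:ℝ)) ω
          * (Z (m+2) ω * (B m).indicator (fun _ => (1:ℝ)) ω) := by
      funext ω
      rw [hg1]
      by_cases h1 : ω ∈ S <;> by_cases h2 : ω ∈ F <;> by_cases h3 : ω ∈ B m <;>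
        simp [Set.indicator_apply, hAm m, Set.mem_inter_iff, h1, h2, h3]
    rw [hcondint (g (m+1)), hSind]
    have hmul' : ∫ ω, (S ∩ F).indicator (fun _ => (1:ℝ)) ω
          * (Z (m+2) ω * (B m).indicator (fun _ => (1:ℝ)) ω) ∂μ
        = (∫ ω, (S ∩ F).indicator (fun _ => (1:ℝ)) ω ∂μ)
          * ∫ ω, Z (m+2) ω * (B m).indicator (fun _ => (1:ℝ)) ω ∂μ := hmul
    rw [hmul', integral_indicator_const (1:ℝ) (hS.inter (hYsetF 1)), hVint2 m]
    have hcond : ν F = (μ S)⁻¹ * μ (S ∩ F) := cond_apply hS μ F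
    have hνF : (ν F).toReal = 1 - px := by
      have hcompl : F = {ω | Y 1 ω = true}ᶜ := by ext ω; simp [hFdef]
      rw [hcompl, prob_compl_eq_one_sub (hYsetT 1),
        ENNReal.toReal_sub_of_le prob_le_one ENNReal.one_ne_top, ENNReal.toReal_one, hpx]
    have hfactor : (μ S).toReal⁻¹ * (μ (S ∩ F)).toReal = 1 - px := by
      rw [← hνF, hcond, ENNReal.toReal_mul, ENNReal.toReal_inv]
    rw [smul_eq_mul, mul_one, ← mul_assoc, ← mul_assoc, measureReal_def, ← hFdef, hfactor, mul_assoc]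
  -- bound for conditional lintegrals
  have hbound : ∀ f : Ω → ℝ, (∫⁻ ω, ‖f ω‖₊ ∂ν) ≤ (μ S)⁻¹ * ∫⁻ ω, ‖f ω‖₊ ∂μ := by
    intro f
    rw [hνdef, ProbabilityTheory.cond, lintegral_smul_measure]
    exact mul_le_mul_right (setLIntegral_le_lintegral _ _) _
  have hK2 : ∀ n, 2 ≤ n → (∫⁻ ω, ‖Z n ω‖₊ ∂μ) = ∫⁻ ω, ‖Z 2 ω‖₊ ∂μ := by
    intro n hn
    have hfm : Measurable (fun c : ℝ × Bool => (‖c.1‖₊ : ℝ≥0∞)) := measurable_fst.nnnorm.coe_nnreal_ennreal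
    rw [← lintegral_map hfm ((hZmeas n).prodMk (hYmeas n)),
      ← lintegral_map hfm ((hZmeas 2).prodMk (hYmeas 2)), hiid n hn]
  have hgB : ∀ (m : ℕ) ω, (‖g (m+1) ω‖₊ : ℝ≥0∞)
      ≤ (B m).indicator (fun ω => (‖Z (m+2) ω‖₊ : ℝ≥0∞)) ω := by
    intro m ω
    have hg1 : g (m+1) = (A (m+2)).indicator (Z (m+2)) := rfl
    rw [hg1]
    by_cases h : ω ∈ A (m + 2)
    · rw [Set.indicator_of_mem h]
      have hB' : ω ∈ B m := by rw [hAm m] at h; exact h.2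
      rw [Set.indicator_of_mem hB']
    · rw [Set.indicator_of_notMem h]
      simp
  have hlin : ∀ m : ℕ, (∫⁻ ω, ((B m).indicator (fun ω => (‖Z (m+2) ω‖₊ : ℝ≥0∞))) ω ∂μ)
      = (∫⁻ ω, ‖Z 2 ω‖₊ ∂μ) * q ^ m := by
    intro m
    have heq : ((fun r : ℝ => (‖r‖₊ : ℝ≥0∞)) ∘ ((B m).indicator (fun _ => (1:ℝ))))
        = (B m).indicator (fun _ => (1:ℝ≥0∞)) := by
      funext ω
      by_cases h : ω ∈ B m <;>
        simp [Function.comp, Set.indicator_of_mem, Set.indicator_of_notMem, h]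
    have hind2 := (hZB m).comp (show Measurable (fun r : ℝ => (‖r‖₊ : ℝ≥0∞)) from measurable_coe_nnreal_ennreal.comp measurable_nnnorm)
      (show Measurable (fun r : ℝ => (‖r‖₊ : ℝ≥0∞)) from measurable_coe_nnreal_ennreal.comp measurable_nnnorm)
    rw [heq] at hind2
    have hpt : ∀ ω, ((B m).indicator (fun ω => (‖Z (m+2) ω‖₊ : ℝ≥0∞))) ω
        = (‖Z (m+2) ω‖₊ : ℝ≥0∞) * (B m).indicator (fun _ => (1:ℝ≥0∞)) ω := by
      intro ω; by_cases h : ω ∈ B m <;> simp [h]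
    calc (∫⁻ ω, ((B m).indicator (fun ω => (‖Z (m+2) ω‖₊ : ℝ≥0∞))) ω ∂μ)
        = ∫⁻ ω, (‖Z (m+2) ω‖₊ : ℝ≥0∞) * (B m).indicator (fun _ => (1:ℝ≥0∞)) ω ∂μ :=
          lintegral_congr hpt
      _ = (∫⁻ ω, ‖Z (m+2) ω‖₊ ∂μ) * ∫⁻ ω, (B m).indicator (fun _ => (1:ℝ≥0∞)) ω ∂μ :=
          lintegral_mul_eq_lintegral_mul_lintegral_of_indepFun
            (hZmeas (m+2)).nnnorm.coe_nnreal_ennreal (measurable_const.indicator (hB m)) hind2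
      _ = (∫⁻ ω, ‖Z 2 ω‖₊ ∂μ) * q ^ m := by
          have h1 : ∫⁻ ω, (B m).indicator (fun _ => (1:ℝ≥0∞)) ω ∂μ = μ (B m) := by
            rw [lintegral_indicator (hB m)]
            simp
          rw [hK2 (m+2) (by omega), h1, hμB m]
  have hlsum : (∑' n, ∫⁻ ω, ‖g n ω‖₊ ∂ν) ≠ ⊤ := by
    rw [tsum_eq_zero_add' (f := fun n => ∫⁻ ω, ‖g n ω‖₊ ∂ν) ENNReal.summable]
    have hμSinv : (μ S)⁻¹ ≠ ⊤ := ENNReal.inv_ne_top.mpr hWx.ne'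
    have h0 : (∫⁻ ω, ‖g 0 ω‖₊ ∂ν) ≠ ⊤ := by
      refine ne_top_of_le_ne_top ?_ (hbound (g 0))
      rw [hg0]
      exact ENNReal.mul_ne_top hμSinv (hZint 1).2.ne
    have h1 : (∑' m : ℕ, ∫⁻ ω, ‖g (m+1) ω‖₊ ∂ν) ≠ ⊤ := by
      have hle : ∀ m : ℕ, (∫⁻ ω, ‖g (m+1) ω‖₊ ∂ν)
          ≤ (μ S)⁻¹ * ((∫⁻ ω, ‖Z 2 ω‖₊ ∂μ) * q ^ m) := by
        intro m
        refine (hbound (g (m+1))).trans ?_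
        refine mul_le_mul_right ?_ _
        rw [← hlin m]
        exact lintegral_mono (hgB m)
      refine ne_top_of_le_ne_top ?_ (ENNReal.tsum_le_tsum hle)
      rw [ENNReal.tsum_mul_left, ENNReal.tsum_mul_left, ENNReal.tsum_geometric]
      refine ENNReal.mul_ne_top hμSinv (ENNReal.mul_ne_top (hZint 2).2.ne ?_)
      simp only [Ne, ENNReal.inv_eq_top, tsub_eq_zero_iff_le]
      exact not_le.mpr hq1
    exact ENNReal.add_ne_top.mpr ⟨h0, h1⟩
  -- main computation
  rw [integral_congr_ae hae,
    integral_tsum (fun n => (hgmeas n).aestronglyMeasurable) hlsum]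
  have hsummable : Summable fun n => ∫ ω, g n ω ∂ν := by
    apply (summable_nat_add_iff 1).mp
    have heq : (fun m => ∫ ω, g (m+1) ω ∂ν) = fun m => (1 - px) * μ' * (1-p) ^ m :=
      funext hterm
    rw [heq]
    exact (summable_geometric_of_lt_one (by linarith) (by linarith)).mul_left _
  rw [Summable.tsum_eq_zero_add hsummable, hg0, ← hμx]
  have hgeo : ∑' m : ℕ, ∫ ω, g (m+1) ω ∂ν = (1 - px) * (μ' / p) := by
    calc ∑' m : ℕ, ∫ ω, g (m+1) ω ∂ν
        = ∑' m : ℕ, (1 - px) * μ' * (1-p) ^ m := tsum_congr hterm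
      _ = (1 - px) * μ' * (1 - (1-p))⁻¹ := by
          rw [tsum_mul_left, tsum_geometric_of_lt_one (by linarith) (by linarith)]
      _ = (1 - px) * (μ' / p) := by
          have h : 1 - (1-p) = p := by ring
          rw [h, div_eq_mul_inv]; ring
  rw [hgeo]
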